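/- arXiv:0907.2336 — 4 statements merged into one kernel-verified Lean document; each statement's English description precedes it below -/
import Mathlib

section
/- Let K be a number field that is a Galois extension of ℚ and is totally real (every embedding of K into ℂ has image contained in ℝ), and let r = [K:ℚ]. If a polynomial f ∈ ℚ[x₁,…,xₙ] is a sum of m squares of polynomials in K[x₁,…,xₙ] (i.e., the image of f under the coefficient-wise inclusion ℚ[x₁,…,xₙ] → K[x₁,…,xₙ] equals Σ_{k=1}^m f_k² for some f_k ∈ K[x₁,…,xₙ]), then f is a sum of (4r − 3)·m squares of polynomials in ℚ[x₁,…,xₙ]. -/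
/-!
The normalized trace `τ = tr_{K/ℚ} / r` is a `ℚ`-linear retraction of `K` onto `ℚ`, and since
`K` is totally real, `τ (x * x) = (1/r) ∑_σ σ(x)² ≥ 0`: the form `(x, y) ↦ τ (x * y)` is positive
semidefinite with `τ (1 * 1) = 1`. Split off the line through `1` and diagonalize the form over
`ℚ` on its `(r - 1)`-dimensional complement; each nonnegative diagonal weight is a sum of four
rational squares, so `τ (x * y) = ∑_{j < 4r - 3} ℓ_j x * ℓ_j y` for `ℚ`-linear forms `ℓ_j`.
Applying `τ` coefficientwise to `f = ∑ g_k²` then gives `f = ∑_{j,k} (ℓ_j g_k)²`.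
-/

open MvPolynomial Module

namespace MvPolynomial

section Module

variable {R A σ : Type*} [CommSemiring R] [CommSemiring A] [Module R A]

noncomputable def mapCoeffs (ℓ : A →ₗ[R] R) : MvPolynomial σ A →ₗ[R] MvPolynomial σ R where
  toFun p := .ofCoeff (Finsupp.mapRange ℓ ℓ.map_zero (AddMonoidAlgebra.coeff p))
  map_add' p q := by ext; simp [coeff]
  map_smul' r p := by ext; simp [coeff]

@[simp]
theorem coeff_mapCoeffs (ℓ : A →ₗ[R] R) (p : MvPolynomial σ A) (d : σ →₀ ℕ) :
    (mapCoeffs ℓ p).coeff d = ℓ (p.coeff d) :=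
  rfl

theorem mapCoeffs_mul_eq_sum {ι : Type*} [Fintype ι] (τ : A →ₗ[R] R) (ℓ : ι → A →ₗ[R] R)
    (hτ : ∀ x y, τ (x * y) = ∑ j, ℓ j x * ℓ j y) (p q : MvPolynomial σ A) :
    mapCoeffs τ (p * q) = ∑ j, mapCoeffs (ℓ j) p * mapCoeffs (ℓ j) q := by
  classical
  ext d
  simp only [coeff_mapCoeffs, coeff_mul, map_sum, hτ, coeff_sum]
  exact Finset.sum_comm

end Module

section Algebra

variable {R A σ : Type*} [CommSemiring R] [CommSemiring A] [Algebra R A]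

theorem mapCoeffs_map_algebraMap {τ : A →ₗ[R] R} (hτ : ∀ r, τ (algebraMap R A r) = r)
    (f : MvPolynomial σ R) : mapCoeffs τ (map (algebraMap R A) f) = f := by
  ext d
  rw [coeff_mapCoeffs, coeff_map, hτ]

theorem eq_sum_sq_of_map_eq_sum_sq {ι κ : Type*} [Fintype ι] [Fintype κ]
    {τ : A →ₗ[R] R} (hτ : ∀ r, τ (algebraMap R A r) = r) {ℓ : ι → A →ₗ[R] R}
    (hℓ : ∀ x y, τ (x * y) = ∑ j, ℓ j x * ℓ j y) {f : MvPolynomial σ R}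
    {g : κ → MvPolynomial σ A} (hfg : map (algebraMap R A) f = ∑ k, g k ^ 2) :
    f = ∑ jk : ι × κ, mapCoeffs (ℓ jk.1) (g jk.2) ^ 2 :=
  calc f = mapCoeffs τ (∑ k, g k * g k) := by
        rw [← mapCoeffs_map_algebraMap hτ f, hfg]
        simp only [sq]
    _ = ∑ jk : ι × κ, mapCoeffs (ℓ jk.1) (g jk.2) ^ 2 := by
        simp only [map_sum, mapCoeffs_mul_eq_sum τ ℓ hℓ, sq, Fintype.sum_prod_type]
        exact Finset.sum_comm

end Algebra

end MvPolynomial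

theorem Rat.exists_sum_four_sq_eq_of_nonneg {q : ℚ} (hq : 0 ≤ q) :
    ∃ s : Fin 4 → ℚ, ∑ t, s t ^ 2 = q := by
  obtain ⟨a, b, c, d, habcd⟩ := Nat.sum_four_squares (q.num.toNat * q.den)
  refine ⟨![a / q.den, b / q.den, c / q.den, d / q.den], ?_⟩
  have hnum : (q.num.toNat : ℚ) = q * q.den := by
    rw [← Int.cast_natCast, Int.toNat_of_nonneg (Rat.num_nonneg.mpr hq), Rat.mul_den_eq_num]
  have hsum : (a : ℚ) ^ 2 + b ^ 2 + c ^ 2 + d ^ 2 = q * q.den ^ 2 := by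
    rw [sq (q.den : ℚ), ← mul_assoc, ← hnum]
    exact_mod_cast habcd
  simp only [Fin.sum_univ_four, Matrix.cons_val, div_pow]
  field_simp
  linear_combination hsum

namespace LinearMap.BilinForm

section CommRing

variable {R V : Type*} [CommRing R] [AddCommGroup V] [Module R V] {B : LinearMap.BilinForm R V}

theorem apply_eq_sum_of_isOrthoᵢ {ι : Type*} [Fintype ι] {v : Basis ι R V} (hv : B.IsOrthoᵢ v)
    (x y : V) : B x y = ∑ i, v.repr x i * v.repr y i * B (v i) (v i) := by
  classical
  conv_lhs => rw [← v.sum_repr x, ← v.sum_repr y]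
  simp only [map_sum, map_smul, LinearMap.sum_apply, LinearMap.smul_apply, smul_eq_mul]
  refine Finset.sum_congr rfl fun i _ => ?_
  rw [Finset.sum_eq_single i (fun j _ hji => by rw [hv hji, mul_zero]) (by simp)]
  ring

theorem apply_eq_mul_add_apply_sub_smul (hB : B.IsSymm) {e : V} (he : B e e = 1) (x y : V) :
    B x y = B e x * B e y + B (x - B e x • e) (y - B e y • e) := by
  simp only [map_sub, map_smul, LinearMap.sub_apply, LinearMap.smul_apply, smul_eq_mul, he,
    hB.eq x e]
  ring

theorem IsPosSemidef.restrict [LE R] (hB : B.IsPosSemidef) (W : Submodule R V) :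
    (B.restrict W).IsPosSemidef :=
  ⟨hB.isSymm.restrict W, ⟨fun x => hB.isNonneg.nonneg x⟩⟩

end CommRing

variable {V : Type*} [AddCommGroup V] [Module ℚ V] [FiniteDimensional ℚ V]
  {B : LinearMap.BilinForm ℚ V}

theorem IsPosSemidef.exists_eq_sum_mul (hB : B.IsPosSemidef) :
    ∃ ℓ : Fin (finrank ℚ V) × Fin 4 → Dual ℚ V, ∀ x y, B x y = ∑ j, ℓ j x * ℓ j y := by
  let := invertibleOfNonzero (two_ne_zero' ℚ)
  obtain ⟨v, hv⟩ := exists_orthogonal_basis (isSymm_iff.mp hB.isSymm)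
  choose s hs using fun i => Rat.exists_sum_four_sq_eq_of_nonneg (hB.isNonneg.nonneg (v i))
  refine ⟨fun it => s it.1 it.2 • v.coord it.1, fun x y => ?_⟩
  rw [apply_eq_sum_of_isOrthoᵢ hv, Fintype.sum_prod_type]
  refine Finset.sum_congr rfl fun i _ => ?_
  rw [← hs i, Finset.mul_sum]
  refine Finset.sum_congr rfl fun t _ => ?_
  simp only [LinearMap.smul_apply, Basis.coord_apply, smul_eq_mul]
  ring

theorem IsPosSemidef.exists_eq_sum_mul_of_apply_self_eq_one (hB : B.IsPosSemidef) {e : V}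
    (he : B e e = 1) :
    ∃ ℓ : Fin (4 * finrank ℚ V - 3) → Dual ℚ V, ∀ x y, B x y = ∑ j, ℓ j x * ℓ j y := by
  set W := LinearMap.ker (B e)
  have hW : finrank ℚ W + 1 = finrank ℚ V := by
    have hsurj : Function.Surjective (B e) := fun q => ⟨q • e, by simp [he]⟩
    rw [← (B e).finrank_range_add_finrank_ker, LinearMap.range_eq_top.mpr hsurj, finrank_top,
      finrank_self, add_comm]
  let π : V →ₗ[ℚ] W :=
    ((LinearMap.id : V →ₗ[ℚ] V) - (B e).smulRight e).codRestrict W fun x => by simp [W, he]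
  obtain ⟨ℓW, hℓW⟩ := (hB.restrict W).exists_eq_sum_mul
  let ℓ : Option (Fin (finrank ℚ W) × Fin 4) → Dual ℚ V :=
    fun o => o.elim (B e) fun i => (ℓW i).comp π
  have hℓ : ∀ x y, B x y = ∑ o, ℓ o x * ℓ o y := fun x y => by
    rw [apply_eq_mul_add_apply_sub_smul hB.isSymm he, Fintype.sum_option]
    exact congrArg _ (hℓW (π x) (π y))
  have hcard : Fintype.card (Fin (4 * finrank ℚ V - 3)) =
      Fintype.card (Option (Fin (finrank ℚ W) × Fin 4)) := by
    simp only [Fintype.card_fin, Fintype.card_option, Fintype.card_prod]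
    omega
  let E := Fintype.equivOfCardEq hcard
  exact ⟨ℓ ∘ E, fun x y => by rw [hℓ, ← E.sum_comp]; rfl⟩

end LinearMap.BilinForm

section TotallyReal

variable {K : Type*} [Field K] [NumberField K]

theorem trace_mul_self_nonneg_of_forall_im_eq_zero (hK : ∀ φ : K →+* ℂ, ∀ x : K, (φ x).im = 0)
    (x : K) : 0 ≤ Algebra.trace ℚ K (x * x) := by
  have h := congrArg Complex.re (trace_eq_sum_embeddings (E := ℂ) (K := ℚ) (x := x * x))
  rw [eq_ratCast, Complex.ratCast_re, Complex.re_sum] at h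
  have hsq : ∀ σ : K →ₐ[ℚ] ℂ, (σ (x * x)).re = (σ x).re ^ 2 := fun σ => by
    rw [map_mul, Complex.mul_re, show (σ x).im = 0 from hK σ x]
    ring
  exact_mod_cast h ▸ Finset.sum_nonneg fun σ _ => (hsq σ).symm ▸ sq_nonneg _

variable (K) in
noncomputable def normalizedTraceForm : LinearMap.BilinForm ℚ K :=
  (LinearMap.mul ℚ K).compr₂ (Algebra.normalizedTrace ℚ K)

theorem normalizedTraceForm_apply (x y : K) :
    normalizedTraceForm K x y = Algebra.normalizedTrace ℚ K (x * y) :=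
  rfl

theorem isPosSemidef_normalizedTraceForm_of_forall_im_eq_zero
    (hK : ∀ φ : K →+* ℂ, ∀ x : K, (φ x).im = 0) : (normalizedTraceForm K).IsPosSemidef := by
  refine ⟨⟨fun x y => ?_⟩, ⟨fun x => ?_⟩⟩
  · rw [normalizedTraceForm_apply, normalizedTraceForm_apply, mul_comm]
  · rw [normalizedTraceForm_apply, Algebra.normalizedTrace_eq_of_finiteDimensional_apply,
      smul_eq_mul]
    exact mul_nonneg (by positivity) (trace_mul_self_nonneg_of_forall_im_eq_zero hK x)

end TotallyReal

theorem sum_of_squares_descent_general (K : Type*) [Field K] [NumberField K]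
    (htotallyReal : ∀ φ : K →+* ℂ, ∀ x : K, (φ x).im = 0)
    (n m : ℕ) (f : MvPolynomial (Fin n) ℚ)
    (hf : ∃ g : Fin m → MvPolynomial (Fin n) K,
      MvPolynomial.map (algebraMap ℚ K) f = ∑ k, (g k) ^ 2) :
    ∃ h : Fin ((4 * Module.finrank ℚ K - 3) * m) → MvPolynomial (Fin n) ℚ,
      f = ∑ i, (h i) ^ 2 := by
  obtain ⟨g, hg⟩ := hf
  have hτ_algebraMap := Algebra.normalizedTrace_algebraMap_apply_eq_self ℚ K
  have h_one : normalizedTraceForm K 1 1 = 1 := by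
    rw [normalizedTraceForm_apply, mul_one, ← map_one (algebraMap ℚ K), hτ_algebraMap]
  obtain ⟨ℓ, hℓ⟩ := (isPosSemidef_normalizedTraceForm_of_forall_im_eq_zero
    htotallyReal).exists_eq_sum_mul_of_apply_self_eq_one h_one
  simp only [normalizedTraceForm_apply] at hℓ
  refine ⟨fun i => mapCoeffs (ℓ (finProdFinEquiv.symm i).1) (g (finProdFinEquiv.symm i).2), ?_⟩
  rw [eq_sum_sq_of_map_eq_sum_sq hτ_algebraMap hℓ hg]
  exact (finProdFinEquiv.symm.sum_comp _).symm

/-- If `K` is a totally real Galois number field of degree `r` over `ℚ` and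
`f ∈ ℚ[x₁,…,xₙ]` is a sum of `m` squares in `K[x₁,…,xₙ]`, then `f` is a sum of
`(4r - 3)·m` squares in `ℚ[x₁,…,xₙ]`. -/
theorem sum_of_squares_descent (K : Type*) [Field K] [NumberField K] [IsGalois ℚ K]
    (htotallyReal : ∀ φ : K →+* ℂ, ∀ x : K, (φ x).im = 0)
    (n m : ℕ) (f : MvPolynomial (Fin n) ℚ)
    (hf : ∃ g : Fin m → MvPolynomial (Fin n) K,
      MvPolynomial.map (algebraMap ℚ K) f = ∑ k, (g k) ^ 2) :
    ∃ h : Fin ((4 * Module.finrank ℚ K - 3) * m) → MvPolynomial (Fin n) ℚ,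
      f = ∑ i, (h i) ^ 2 :=
  sum_of_squares_descent_general K htotallyReal n m f hf
end

section
/- Let K be a number field that is a Galois extension of ℚ and is totally real, and let r = [K:ℚ]. If a polynomial f ∈ ℚ[x₁,…,xₙ] is a sum of m squares of polynomials in K[x₁,…,xₙ], then f is a sum of 2^{r+1} · (r+1 choose 2) · 4m squares of polynomials in ℚ[x₁,…,xₙ]. -/
/-!
The trace form `(x, y) ↦ Tr_{K/ℚ}(x y)` of a totally real field is positive definite, so after
diagonalising it and writing each (positive rational) diagonal entry as a sum of four squares it
becomes `∑ⱼ Lⱼ(x) Lⱼ(y)` for `4r` rational linear forms `Lⱼ`. Applying the trace coefficientwise to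
`f = ∑ₖ gₖ²` therefore gives `r f = ∑ₖ ∑ⱼ Lⱼ(gₖ)²`, and dividing by `r`, itself a sum of four
rational squares, writes `f` as a sum of `16 r m` rational squares, which is within the bound.
-/

open MvPolynomial

namespace MvPolynomial

variable {σ R S : Type*}

theorem addMonoidAlgebraMap_mul_eq_sum [CommSemiring R] [CommSemiring S] {ι : Type*} [Fintype ι]
    (T : R →+ S) (L : ι → R →+ S) (hTL : ∀ a b, T (a * b) = ∑ j, L j a * L j b)
    (p q : MvPolynomial σ R) :
    (AddMonoidAlgebra.map T (p * q) : MvPolynomial σ S) =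
      ∑ j, (AddMonoidAlgebra.map (L j) p * AddMonoidAlgebra.map (L j) q : MvPolynomial σ S) := by
  classical
  ext u
  simp only [coeff_addMonoidAlgebraMap, coeff_mul, coeff_sum, map_sum, hTL]
  exact Finset.sum_comm

theorem addMonoidAlgebraMap_sum_sq_eq_sum_sum_sq [CommSemiring R] [CommSemiring S]
    {ι κ : Type*} [Fintype ι] (T : R →+ S) (L : ι → R →+ S)
    (hTL : ∀ a b, T (a * b) = ∑ j, L j a * L j b) (s : Finset κ) (g : κ → MvPolynomial σ R) :
    (AddMonoidAlgebra.map T (∑ k ∈ s, g k ^ 2) : MvPolynomial σ S) =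
      ∑ k ∈ s, ∑ j, (AddMonoidAlgebra.map (L j) (g k) : MvPolynomial σ S) ^ 2 := by
  simp only [AddMonoidAlgebra.map_sum, sq, addMonoidAlgebraMap_mul_eq_sum T L hTL]

theorem addMonoidAlgebraMap_trace_map_algebraMap [CommRing R] [CommRing S] [Algebra R S]
    [StrongRankCondition R] [Module.Free R S] (f : MvPolynomial σ R) :
    (AddMonoidAlgebra.map (Algebra.trace R S).toAddMonoidHom (map (algebraMap R S) f) :
      MvPolynomial σ R) = Module.finrank R S • f := by
  ext u
  rw [coeff_addMonoidAlgebraMap, coeff_map, coeff_smul]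
  exact Algebra.trace_algebraMap _

end MvPolynomial

theorem Rat.sum_four_squares {q : ℚ} (hq : 0 ≤ q) : ∃ a : Fin 4 → ℚ, ∑ t, a t ^ 2 = q := by
  obtain ⟨a, b, c, d, habcd⟩ := Nat.sum_four_squares (q.num * q.den).toNat
  have hN : ((a ^ 2 + b ^ 2 + c ^ 2 + d ^ 2 : ℕ) : ℚ) = q.num * q.den := by
    rw [habcd, ← Int.cast_natCast, Int.toNat_of_nonneg (by positivity)]; push_cast; rfl
  refine ⟨![a / q.den, b / q.den, c / q.den, d / q.den], ?_⟩
  calc ∑ t, ![(a : ℚ) / q.den, b / q.den, c / q.den, d / q.den] t ^ 2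
      = ((a ^ 2 + b ^ 2 + c ^ 2 + d ^ 2 : ℕ) : ℚ) / (q.den * q.den) := by
        simp only [Fin.sum_univ_four, Matrix.cons_val_zero, Matrix.cons_val_one, Matrix.cons_val,
          div_pow, Nat.cast_add, Nat.cast_pow]
        ring
    _ = q := by rw [hN, mul_div_mul_right _ _ (by positivity), Rat.num_div_den]

theorem exists_sum_sq_eq_of_smul_eq_sum_sq {A ι : Type*} [CommRing A] [Algebra ℚ A] [Fintype ι]
    {c : ℚ} (hc : 0 < c) {f : A} {h : ι → A} (hf : c • f = ∑ i, h i ^ 2) :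
    ∃ h' : Fin 4 × ι → A, f = ∑ j, h' j ^ 2 := by
  obtain ⟨b, hb⟩ := Rat.sum_four_squares hc.le
  have hb' : (∑ t, (b t / c) ^ 2) * c = 1 := by
    simp only [div_pow, ← Finset.sum_div, hb]
    field_simp
  refine ⟨fun j ↦ (b j.1 / c) • h j.2, ?_⟩
  calc f = (∑ t, (b t / c) ^ 2) • c • f := by rw [smul_smul, hb', one_smul]
    _ = _ := by
      simp only [hf, Finset.sum_smul, Finset.smul_sum, smul_pow, Fintype.sum_prod_type]
      exact Finset.sum_comm

theorem exists_fin_sum_sq_eq_of_card_le {R ι : Type*} [CommSemiring R] [Fintype ι] {M : ℕ}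
    (hM : Fintype.card ι ≤ M) (h : ι → R) : ∃ h' : Fin M → R, ∑ j, h' j ^ 2 = ∑ i, h i ^ 2 := by
  classical
  obtain ⟨e⟩ : Nonempty (ι ↪ Fin M) :=
    Function.Embedding.nonempty_of_card_le (by simpa using hM)
  refine ⟨Function.extend e h 0, ?_⟩
  rw [← Finset.sum_subset (Finset.subset_univ (Finset.univ.map e)), Finset.sum_map]
  · simp [e.injective.extend_apply]
  · intro j _ hj
    rw [Function.extend_apply' _ _ _ (by simpa using hj)]
    simp

theorem LinearMap.BilinForm.apply_eq_sum_of_isOrthoᵢ_s1 {R M ι : Type*} [CommRing R]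
    [AddCommGroup M] [Module R M] [Fintype ι] {B : LinearMap.BilinForm R M}
    {v : Module.Basis ι R M} (hv : B.IsOrthoᵢ v) (x y : M) :
    B x y = ∑ i, v.repr x i * v.repr y i * B (v i) (v i) := by
  conv_lhs => rw [← v.sum_repr x, ← v.sum_repr y]
  simp only [map_sum, LinearMap.sum_apply, map_smul, LinearMap.smul_apply, smul_eq_mul]
  refine Finset.sum_congr rfl fun i _ ↦ ?_
  rw [Finset.sum_eq_single i (fun j _ hji ↦ by rw [hv hji]; ring) (by simp)]
  ring

theorem LinearMap.BilinForm.exists_eq_sum_mul_of_pos {V : Type*} [AddCommGroup V] [Module ℚ V]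
    [FiniteDimensional ℚ V] {B : LinearMap.BilinForm ℚ V} (hB : LinearMap.IsSymm B)
    (hpos : ∀ x, x ≠ 0 → 0 < B x x) :
    ∃ L : Fin (Module.finrank ℚ V) × Fin 4 → Module.Dual ℚ V,
      ∀ x y, B x y = ∑ j, L j x * L j y := by
  obtain ⟨v, hv⟩ := LinearMap.BilinForm.exists_orthogonal_basis hB
  choose a ha using fun i ↦ Rat.sum_four_squares (hpos (v i) (v.ne_zero i)).le
  refine ⟨fun j ↦ a j.1 j.2 • v.coord j.1, fun x y ↦ ?_⟩
  rw [LinearMap.BilinForm.apply_eq_sum_of_isOrthoᵢ_s1 hv, Fintype.sum_prod_type]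
  refine Finset.sum_congr rfl fun i _ ↦ ?_
  simp only [LinearMap.smul_apply, Module.Basis.coord_apply, smul_eq_mul, ← ha i, Finset.mul_sum]
  exact Finset.sum_congr rfl fun t _ ↦ by ring

theorem trace_mul_self_pos {K : Type*} [Field K] [NumberField K]
    (hK : ∀ φ : K →+* ℂ, ∀ x : K, (φ x).im = 0) {x : K} (hx : x ≠ 0) :
    0 < Algebra.trace ℚ K (x * x) := by
  have him : ∀ σ : K →ₐ[ℚ] ℂ, (σ x).im = 0 := fun σ ↦ hK σ x
  have hre : ((Algebra.trace ℚ K (x * x) : ℚ) : ℝ) = ∑ σ : K →ₐ[ℚ] ℂ, (σ x).re ^ 2 := by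
    have := congrArg Complex.re (trace_eq_sum_embeddings ℂ (K := ℚ) (x := x * x))
    simpa [Complex.mul_re, him, sq] using this
  let σ₀ : K →ₐ[ℚ] ℂ := IsAlgClosed.lift
  have hσ₀ : (σ₀ x).re ≠ 0 := fun h ↦ (map_ne_zero σ₀).2 hx (Complex.ext h (him σ₀))
  have : (0 : ℝ) < ∑ σ : K →ₐ[ℚ] ℂ, (σ x).re ^ 2 :=
    Finset.sum_pos' (fun σ _ ↦ sq_nonneg _) ⟨σ₀, Finset.mem_univ _, by positivity⟩
  exact_mod_cast hre ▸ this

theorem four_mul_le_two_pow_mul_choose_two (r : ℕ) : 4 * r ≤ 2 ^ (r + 1) * (r + 1).choose 2 := by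
  rcases r.eq_zero_or_pos with rfl | hr
  · simp
  have h4 : 4 ≤ 2 ^ (r + 1) := by
    calc 4 = 2 ^ 2 := rfl
      _ ≤ 2 ^ (r + 1) := Nat.pow_le_pow_right (by norm_num) (by omega)
  have hc : r ≤ (r + 1).choose 2 := by
    rw [Nat.choose_succ_succ, Nat.choose_one_right]; omega
  exact Nat.mul_le_mul h4 hc

theorem sum_of_squares_descent_hillar_general (K : Type*) [Field K] [NumberField K]
    (htotallyReal : ∀ φ : K →+* ℂ, ∀ x : K, (φ x).im = 0)
    (n m : ℕ) (f : MvPolynomial (Fin n) ℚ)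
    (hf : ∃ g : Fin m → MvPolynomial (Fin n) K,
      MvPolynomial.map (algebraMap ℚ K) f = ∑ k, (g k) ^ 2) :
    ∃ h : Fin (2 ^ (Module.finrank ℚ K + 1) * (Module.finrank ℚ K + 1).choose 2 * (4 * m)) →
        MvPolynomial (Fin n) ℚ,
      f = ∑ i, (h i) ^ 2 := by
  obtain ⟨g, hg⟩ := hf
  set r := Module.finrank ℚ K
  obtain ⟨L, hL⟩ := (Algebra.traceForm ℚ K).exists_eq_sum_mul_of_pos
    (LinearMap.BilinForm.isSymm_iff.1 (Algebra.traceForm_isSymm (R := ℚ) (S := K)))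
    (fun x hx ↦ trace_mul_self_pos htotallyReal hx)
  have hrf : (r : ℚ) • f = ∑ p : Fin m × (Fin r × Fin 4),
      (AddMonoidAlgebra.map (L p.2).toAddMonoidHom (g p.1) : MvPolynomial (Fin n) ℚ) ^ 2 := by
    rw [Nat.cast_smul_eq_nsmul, ← addMonoidAlgebraMap_trace_map_algebraMap (S := K), hg,
      addMonoidAlgebraMap_sum_sq_eq_sum_sum_sq _ (fun j ↦ (L j).toAddMonoidHom) hL,
      Fintype.sum_prod_type]
  obtain ⟨h₀, hh₀⟩ := exists_sum_sq_eq_of_smul_eq_sum_sq (Nat.cast_pos.2 Module.finrank_pos) hrf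
  have hcard :
      Fintype.card (Fin 4 × Fin m × Fin r × Fin 4) ≤ 2 ^ (r + 1) * (r + 1).choose 2 * (4 * m) :=
    calc Fintype.card (Fin 4 × Fin m × Fin r × Fin 4) = 4 * r * (4 * m) := by
          simp only [Fintype.card_prod, Fintype.card_fin]; ring
      _ ≤ _ := Nat.mul_le_mul_right _ (four_mul_le_two_pow_mul_choose_two r)
  obtain ⟨h, hh⟩ := exists_fin_sum_sq_eq_of_card_le hcard h₀
  exact ⟨h, hh₀.trans hh.symm⟩

/-- Hillar's bound: if `K` is a totally real Galois number field of degree `r` over `ℚ`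
and `f ∈ ℚ[x₁,…,xₙ]` is a sum of `m` squares in `K[x₁,…,xₙ]`, then `f` is a sum of
`2^(r+1) · (r+1 choose 2) · 4m` squares in `ℚ[x₁,…,xₙ]`. -/
theorem sum_of_squares_descent_hillar (K : Type*) [Field K] [NumberField K] [IsGalois ℚ K]
    (htotallyReal : ∀ φ : K →+* ℂ, ∀ x : K, (φ x).im = 0)
    (n m : ℕ) (f : MvPolynomial (Fin n) ℚ)
    (hf : ∃ g : Fin m → MvPolynomial (Fin n) K,
      MvPolynomial.map (algebraMap ℚ K) f = ∑ k, (g k) ^ 2) :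
    ∃ h : Fin (2 ^ (Module.finrank ℚ K + 1) * (Module.finrank ℚ K + 1).choose 2 * (4 * m)) →
        MvPolynomial (Fin n) ℚ,
      f = ∑ i, (h i) ^ 2 :=
  sum_of_squares_descent_hillar_general K htotallyReal n m f hf
end

section
/- Let d be a positive rational number that is not the square of a rational, and let K = ℚ(√d). Suppose d is a sum of l squares of rational numbers (such l ≤ 4 always exists). If f ∈ ℚ[x₁,…,xₙ] is a sum of m squares of polynomials in K[x₁,…,xₙ], then f is a sum of (1 + l)·m squares of polynomials in ℚ[x₁,…,xₙ]; in particular f is a sum of at most 5m squares in ℚ[x₁,…,xₙ]. -/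
/-!
Write each `gₖ ∈ K[x]` as `Aₖ + √d·Bₖ` with `Aₖ, Bₖ ∈ ℚ[x]`. Then
`Σ gₖ² = (Σ Aₖ² + d·Σ Bₖ²) + √d·(2·Σ AₖBₖ)`, and since `1, √d` are linearly independent over `ℚ`,
comparing coefficients gives `f = Σ Aₖ² + d·Σ Bₖ²`. Writing `d = Σ qᵢ²` turns `d·Σ Bₖ²` into
`Σ (qᵢBₖ)²`, so `f` is a sum of `m + l·m` squares; Lagrange's theorem supplies `l = 4`.
-/

open MvPolynomial

def IsSumOfSquares {R : Type*} [CommSemiring R] (N : ℕ) (x : R) : Prop :=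
  ∃ h : Fin N → R, x = ∑ i, h i ^ 2

namespace IsSumOfSquares

variable {R S : Type*} [CommSemiring R] [CommSemiring S] {M N : ℕ} {x y : R}

theorem sq (x : R) : IsSumOfSquares 1 (x ^ 2) :=
  ⟨fun _ => x, by simp⟩

theorem add (hx : IsSumOfSquares M x) (hy : IsSumOfSquares N y) :
    IsSumOfSquares (M + N) (x + y) := by
  obtain ⟨g, rfl⟩ := hx
  obtain ⟨h, rfl⟩ := hy
  exact ⟨Fin.addCases g h, by simp [Fin.sum_univ_add]⟩

theorem mul (hx : IsSumOfSquares M x) (hy : IsSumOfSquares N y) :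
    IsSumOfSquares (M * N) (x * y) := by
  obtain ⟨g, rfl⟩ := hx
  obtain ⟨h, rfl⟩ := hy
  refine ⟨fun j => g (finProdFinEquiv.symm j).1 * h (finProdFinEquiv.symm j).2, ?_⟩
  rw [finProdFinEquiv.symm.sum_comp (fun p => (g p.1 * h p.2) ^ 2), Fintype.sum_prod_type,
    Finset.sum_mul_sum]
  simp only [mul_pow]

theorem map (φ : R →+* S) (hx : IsSumOfSquares N x) : IsSumOfSquares N (φ x) := by
  obtain ⟨g, rfl⟩ := hx
  exact ⟨fun i => φ (g i), by simp⟩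

end IsSumOfSquares

theorem Nat.isSumOfSquares_four (n : ℕ) : IsSumOfSquares 4 n := by
  obtain ⟨a, b, c, e, h⟩ := Nat.sum_four_squares n
  exact ⟨![a, b, c, e], by simp [Fin.sum_univ_four, h]⟩

theorem Rat.isSumOfSquares_four {d : ℚ} (hd : 0 ≤ d) : IsSumOfSquares 4 d := by
  have hd_eq : d = ((d.num.toNat * d.den : ℕ) : ℚ) * ((d.den : ℚ)⁻¹) ^ 2 := by
    have hnum : ((d.num.toNat : ℕ) : ℚ) = d.num := by
      exact_mod_cast Int.toNat_of_nonneg (Rat.num_nonneg.mpr hd)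
    push_cast
    rw [hnum, ← Rat.mul_den_eq_num]
    field_simp
  rw [hd_eq]
  exact ((Nat.isSumOfSquares_four _).map (Nat.castRingHom ℚ)).mul (IsSumOfSquares.sq _)

section AdjoinSqrt

variable {R K : Type*} [CommRing R] [CommRing K] [Algebra R K] {d : R} {s : K}

theorem exists_eq_algebraMap_add_algebraMap_mul (hs : s ^ 2 = algebraMap R K d)
    (hgen : Algebra.adjoin R ({s} : Set K) = ⊤) (x : K) :
    ∃ a b : R, x = algebraMap R K a + algebraMap R K b * s := by
  have hx : x ∈ Algebra.adjoin R ({s} : Set K) := hgen ▸ Algebra.mem_top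
  induction hx using Algebra.adjoin_induction with
  | mem y hy => exact ⟨0, 1, by simp [Set.mem_singleton_iff.mp hy]⟩
  | algebraMap r => exact ⟨r, 0, by simp⟩
  | add y z _ _ hy hz =>
    obtain ⟨a, b, rfl⟩ := hy
    obtain ⟨c, e, rfl⟩ := hz
    exact ⟨a + c, b + e, by simp only [map_add]; ring⟩
  | mul y z _ _ hy hz =>
    obtain ⟨a, b, rfl⟩ := hy
    obtain ⟨c, e, rfl⟩ := hz
    refine ⟨a * c + b * e * d, a * e + b * c, ?_⟩
    simp only [map_add, map_mul]
    linear_combination (algebraMap R K b * algebraMap R K e) * hs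

namespace MvPolynomial

variable {σ : Type*}

theorem exists_eq_map_add_C_mul_map (hs : s ^ 2 = algebraMap R K d)
    (hgen : Algebra.adjoin R ({s} : Set K) = ⊤) (g : MvPolynomial σ K) :
    ∃ A B : MvPolynomial σ R, g = map (algebraMap R K) A + C s * map (algebraMap R K) B := by
  induction g using MvPolynomial.induction_on with
  | C x =>
    obtain ⟨a, b, rfl⟩ := exists_eq_algebraMap_add_algebraMap_mul hs hgen x
    exact ⟨C a, C b, by simp only [map_C, C_add, C_mul]; ring⟩
  | add p q hp hq =>
    obtain ⟨A, B, rfl⟩ := hp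
    obtain ⟨A', B', rfl⟩ := hq
    exact ⟨A + A', B + B', by simp only [map_add]; ring⟩
  | mul_X p i hp =>
    obtain ⟨A, B, rfl⟩ := hp
    exact ⟨A * X i, B * X i, by simp only [map_mul, map_X]; ring⟩

theorem sq_map_add_C_mul_map (hs : s ^ 2 = algebraMap R K d) (A B : MvPolynomial σ R) :
    (map (algebraMap R K) A + C s * map (algebraMap R K) B) ^ 2 =
      map (algebraMap R K) (A ^ 2 + C d * B ^ 2) + C s * map (algebraMap R K) (2 * A * B) := by
  simp only [map_add, map_mul, map_pow, map_C, map_ofNat]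
  rw [← hs, C_pow]
  ring

end MvPolynomial

end AdjoinSqrt

section QuadraticExtension

variable {F K : Type*} [Field F] [CommRing K] [Nontrivial K] [Algebra F K] {d : F} {s : K}

theorem eq_zero_of_algebraMap_add_algebraMap_mul_eq_zero
    (hd : ¬∃ c : F, c ^ 2 = d) (hs : s ^ 2 = algebraMap F K d) {a b : F}
    (h : algebraMap F K a + algebraMap F K b * s = 0) : a = 0 ∧ b = 0 := by
  have hinj := (algebraMap F K).injective
  obtain rfl | hb := eq_or_ne b 0
  · simp only [map_zero, zero_mul, add_zero] at h
    exact ⟨hinj (h.trans (map_zero _).symm), rfl⟩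
  · have hbb : algebraMap F K b⁻¹ * algebraMap F K b = 1 := by
      rw [← map_mul, inv_mul_cancel₀ hb, map_one]
    have hs_eq : s = algebraMap F K (-a / b) := by
      rw [div_eq_mul_inv, map_mul, map_neg]
      linear_combination algebraMap F K b⁻¹ * h - s * hbb
    exact (hd ⟨-a / b, hinj (by rw [map_pow, ← hs_eq, hs])⟩).elim

namespace MvPolynomial

variable {σ : Type*}

theorem eq_of_map_eq_map_add_C_mul_map (hd : ¬∃ c : F, c ^ 2 = d)
    (hs : s ^ 2 = algebraMap F K d) {f P Q : MvPolynomial σ F}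
    (h : map (algebraMap F K) f = map (algebraMap F K) P + C s * map (algebraMap F K) Q) :
    f = P := by
  ext μ
  have hμ := congrArg (coeff μ) h
  rw [coeff_map, coeff_add, coeff_map, coeff_C_mul, coeff_map] at hμ
  have := eq_zero_of_algebraMap_add_algebraMap_mul_eq_zero hd hs
    (a := coeff μ f - coeff μ P) (b := -coeff μ Q)
    (by simp only [map_sub, map_neg]; linear_combination hμ)
  exact sub_eq_zero.mp this.1

theorem exists_eq_add_C_mul_of_isSumOfSquares_map (hd : ¬∃ c : F, c ^ 2 = d)
    (hs : s ^ 2 = algebraMap F K d) (hgen : Algebra.adjoin F ({s} : Set K) = ⊤) {m : ℕ}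
    {f : MvPolynomial σ F} (hf : IsSumOfSquares m (map (algebraMap F K) f)) :
    ∃ P Q : MvPolynomial σ F, IsSumOfSquares m P ∧ IsSumOfSquares m Q ∧ f = P + C d * Q := by
  obtain ⟨g, hg⟩ := hf
  choose A B hAB using fun k => exists_eq_map_add_C_mul_map hs hgen (g k)
  refine ⟨∑ k, A k ^ 2, ∑ k, B k ^ 2, ⟨A, rfl⟩, ⟨B, rfl⟩,
    eq_of_map_eq_map_add_C_mul_map hd hs (Q := ∑ k, 2 * A k * B k) ?_⟩
  simp only [hg, hAB, sq_map_add_C_mul_map hs, map_add, map_mul, map_sum, map_C,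
    Finset.sum_add_distrib, Finset.mul_sum]

end MvPolynomial

end QuadraticExtension

/-- Quadratic case, square count: let `d > 0` be rational, not a rational square, with
`d` a sum of `l` rational squares, and let `K = ℚ(√d)`.  If `f ∈ ℚ[x₁,…,xₙ]` is a sum
of `m` squares in `K[x₁,…,xₙ]`, then `f` is a sum of `(1+l)·m` squares in
`ℚ[x₁,…,xₙ]`; in particular, `f` is a sum of `N ≤ 5m` squares in `ℚ[x₁,…,xₙ]`. -/
theorem quadratic_field_sos_descent (d : ℚ) (hd : 0 < d) (hdsq : ¬∃ q : ℚ, q ^ 2 = d)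
    (l : ℕ) (q : Fin l → ℚ) (hdl : d = ∑ i, (q i) ^ 2)
    (K : Type*) [Field K] [Algebra ℚ K] (s : K) (hs : s ^ 2 = algebraMap ℚ K d)
    (hgen : Algebra.adjoin ℚ ({s} : Set K) = ⊤)
    (n m : ℕ) (f : MvPolynomial (Fin n) ℚ)
    (hf : ∃ g : Fin m → MvPolynomial (Fin n) K,
      MvPolynomial.map (algebraMap ℚ K) f = ∑ k, (g k) ^ 2) :
    (∃ h : Fin ((1 + l) * m) → MvPolynomial (Fin n) ℚ, f = ∑ i, (h i) ^ 2) ∧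
    ∃ N : ℕ, N ≤ 5 * m ∧ ∃ h : Fin N → MvPolynomial (Fin n) ℚ, f = ∑ i, (h i) ^ 2 := by
  obtain ⟨P, Q, hP, hQ, rfl⟩ := exists_eq_add_C_mul_of_isSumOfSquares_map hdsq hs hgen hf
  have descent : ∀ {l : ℕ}, IsSumOfSquares l d → IsSumOfSquares ((1 + l) * m) (P + C d * Q) :=
    fun hl => by simpa only [add_mul, one_mul] using hP.add ((hl.map C).mul hQ)
  exact ⟨descent ⟨q, hdl⟩, (1 + 4) * m, by norm_num, descent (Rat.isSumOfSquares_four hd.le)⟩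
end

section
/- Let α be a real root of u(x) = x³ − 3x + 1 (all three roots α, β = 2 − α − α², γ = α² − 2 of u are real), and let K = ℚ(α), a totally real cyclic Galois cubic field. Then in K[x,y] the polynomial f = 3 − 12y − 6x³ + 18y² + 3x⁶ + 12x³y − 6xy³ + 6x²y⁴ (with rational coefficients) satisfies f = (x³ + α²y + βxy² − 1)² + (x³ + β²y + γxy² − 1)² + (x³ + γ²y + αxy² − 1)², i.e., f is a sum of 3 squares of polynomials in K[x,y]. -/
/-!
Expanding the three squares, the identity holds for any triple `(a, b, c)` with
`a + b + c = 0`, `a² + b² + c² = 6`, `a⁴ + b⁴ + c⁴ = 18` and `a²b + b²c + c²a = -3`, the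
second coefficients `(b, c, a)` being the cyclic shift of `(a, b, c)`. For the roots
`a`, `b = 2 - a - a²`, `c = a² - 2` of `x³ - 3x + 1` these power sums are polynomial
identities in `a` modulo the cubic.
-/

open MvPolynomial

theorem sum_three_sq_eq_of_power_sums {R : Type*} [CommRing R] (a b c x y : R)
    (h₁ : a + b + c = 0) (h₂ : a ^ 2 + b ^ 2 + c ^ 2 = 6) (h₄ : a ^ 4 + b ^ 4 + c ^ 4 = 18)
    (hcyc : a ^ 2 * b + b ^ 2 * c + c ^ 2 * a = -3) :
    3 - 12 * y - 6 * x ^ 3 + 18 * y ^ 2 + 3 * x ^ 6 + 12 * x ^ 3 * y - 6 * x * y ^ 3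
        + 6 * x ^ 2 * y ^ 4 =
      (x ^ 3 + a ^ 2 * y + b * x * y ^ 2 - 1) ^ 2 + (x ^ 3 + b ^ 2 * y + c * x * y ^ 2 - 1) ^ 2
        + (x ^ 3 + c ^ 2 * y + a * x * y ^ 2 - 1) ^ 2 := by
  linear_combination (-(2 * (x ^ 3 - 1) * y + x ^ 2 * y ^ 4)) * h₂
    - 2 * (x ^ 3 - 1) * x * y ^ 2 * h₁ - y ^ 2 * h₄ - 2 * x * y ^ 3 * hcyc

section CubicRoot

variable {R : Type*} [CommRing R] {a : R}

theorem add_sq_add_sq_of_cubic_root (ha : a ^ 3 - 3 * a + 1 = 0) :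
    a ^ 2 + (2 - a - a ^ 2) ^ 2 + (a ^ 2 - 2) ^ 2 = 6 := by
  linear_combination (2 + 2 * a) * ha

theorem add_pow_four_add_pow_four_of_cubic_root (ha : a ^ 3 - 3 * a + 1 = 0) :
    a ^ 4 + (2 - a - a ^ 2) ^ 4 + (a ^ 2 - 2) ^ 4 = 18 := by
  linear_combination (14 + 10 * a - 10 * a ^ 2 - 4 * a ^ 3 + 4 * a ^ 4 + 2 * a ^ 5) * ha

theorem cyclic_sum_sq_mul_of_cubic_root (ha : a ^ 3 - 3 * a + 1 = 0) :
    a ^ 2 * (2 - a - a ^ 2) + (2 - a - a ^ 2) ^ 2 * (a ^ 2 - 2) + (a ^ 2 - 2) ^ 2 * a = -3 := by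
  linear_combination (-5 - 3 * a + 3 * a ^ 2 + a ^ 3) * ha

theorem sum_three_sq_eq_of_cubic_root (x y : R) (ha : a ^ 3 - 3 * a + 1 = 0) :
    3 - 12 * y - 6 * x ^ 3 + 18 * y ^ 2 + 3 * x ^ 6 + 12 * x ^ 3 * y - 6 * x * y ^ 3
        + 6 * x ^ 2 * y ^ 4 =
      (x ^ 3 + a ^ 2 * y + (2 - a - a ^ 2) * x * y ^ 2 - 1) ^ 2
        + (x ^ 3 + (2 - a - a ^ 2) ^ 2 * y + (a ^ 2 - 2) * x * y ^ 2 - 1) ^ 2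
        + (x ^ 3 + (a ^ 2 - 2) ^ 2 * y + a * x * y ^ 2 - 1) ^ 2 :=
  sum_three_sq_eq_of_power_sums a _ _ x y (by ring) (add_sq_add_sq_of_cubic_root ha)
    (add_pow_four_add_pow_four_of_cubic_root ha) (cyclic_sum_sq_mul_of_cubic_root ha)

end CubicRoot

/-- Let `α` be a real root of `u(x) = x³ − 3x + 1`, with `β = 2 − α − α²` and
`γ = α² − 2` its other roots, and let `K = ℚ(α) ⊆ ℝ`.  Then in `K[x,y]`
(with `x = X 0`, `y = X 1`) the rational polynomial
`f = 3 − 12y − 6x³ + 18y² + 3x⁶ + 12x³y − 6xy³ + 6x²y⁴` equals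
`(x³+α²y+βxy²−1)² + (x³+β²y+γxy²−1)² + (x³+γ²y+αxy²−1)²`,
i.e. `f` is a sum of `3` squares in `K[x,y]`. -/
theorem hillar_example_sos_cubic_field (α : ℝ) (hα : α ^ 3 - 3 * α + 1 = 0) :
    letI K : IntermediateField ℚ ℝ := IntermediateField.adjoin ℚ {α}
    letI a : K := ⟨α, IntermediateField.mem_adjoin_simple_self ℚ α⟩
    letI b : K := 2 - a - a ^ 2
    letI c : K := a ^ 2 - 2
    letI x : MvPolynomial (Fin 2) K := X 0
    letI y : MvPolynomial (Fin 2) K := X 1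
    MvPolynomial.map (algebraMap ℚ K)
      (C 3 - C 12 * X 1 - C 6 * (X 0) ^ 3 + C 18 * (X 1) ^ 2 + C 3 * (X 0) ^ 6
        + C 12 * (X 0) ^ 3 * X 1 - C 6 * X 0 * (X 1) ^ 3 + C 6 * (X 0) ^ 2 * (X 1) ^ 4) =
      (x ^ 3 + C (a ^ 2) * y + C b * x * y ^ 2 - 1) ^ 2 +
      (x ^ 3 + C (b ^ 2) * y + C c * x * y ^ 2 - 1) ^ 2 +
      (x ^ 3 + C (c ^ 2) * y + C a * x * y ^ 2 - 1) ^ 2 := by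
  set a : IntermediateField.adjoin ℚ {α} := ⟨α, IntermediateField.mem_adjoin_simple_self ℚ α⟩
  have ha : a ^ 3 - 3 * a + 1 = 0 := Subtype.ext (by push_cast; exact hα)
  have hCa : (C a : MvPolynomial (Fin 2) _) ^ 3 - 3 * C a + 1 = 0 := by
    simpa only [map_sub, map_add, map_mul, map_pow, map_ofNat, map_one, map_zero]
      using congrArg (C (σ := Fin 2)) ha
  simp only [map_sub, map_add, map_mul, map_pow, map_X, map_ofNat]
  exact sum_three_sq_eq_of_cubic_root (X 0) (X 1) hCa
end
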